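/- Let φ be a forecasting system and let 𝒮 be a countable set of selection processes. Then the event { ω ∈ Ω : ω is 𝒮-random for φ } is almost sure for φ. -/

import Mathlib

open Filter Classical

/-- Situations: finite binary strings. -/
abbrev Situation := List Bool

/-- Paths: infinite binary sequences. -/
abbrev BinPath := ℕ → Bool

/-- The length-`n` prefix `ω_{1:n}` of a path. -/
def pref (ω : BinPath) (n : ℕ) : Situation := List.ofFn (fun i : Fin n => ω i)

/-- The real value of a bit. -/
def bit (x : Bool) : ℝ := if x then 1 else 0

/-- Local expectation `E_p(f) = p f(1) + (1-p) f(0)` of a gamble `f : Bool → ℝ`. -/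
def localE (p : ℝ) (f : Bool → ℝ) : ℝ := p * f true + (1 - p) * f false

/-- Upper expectation of a gamble for interval forecast `[lo, hi]`. -/
def upperE (lo hi : ℝ) (f : Bool → ℝ) : ℝ := max (localE lo f) (localE hi f)

/-- A forecasting system, given by lower and upper bounds `lo hi : Situation → ℝ`,
is proper when `0 ≤ lo s ≤ hi s ≤ 1` everywhere. -/
def IsForecastingSystem (lo hi : Situation → ℝ) : Prop :=
  ∀ s, 0 ≤ lo s ∧ lo s ≤ hi s ∧ hi s ≤ 1

/-- The process difference `ΔF(s) : x ↦ F(s·x) − F(s)`. -/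
def diffP (F : Situation → ℝ) (s : Situation) : Bool → ℝ := fun x => F (s ++ [x]) - F s

/-- A supermartingale for the forecasting system `(lo, hi)`. -/
def IsSupermartingale (lo hi : Situation → ℝ) (F : Situation → ℝ) : Prop :=
  ∀ s, upperE (lo s) (hi s) (diffP F s) ≤ 0

/-- A test supermartingale: a nonnegative supermartingale starting at 1. -/
def IsTestSupermartingale (lo hi : Situation → ℝ) (F : Situation → ℝ) : Prop :=
  IsSupermartingale lo hi F ∧ (∀ s, 0 ≤ F s) ∧ F [] = 1

/-- A real process is (positive) rational-valued and recursive. -/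
def IsRecursiveRational (F : Situation → ℝ) : Prop :=
  ∃ q : Situation → ℚ, Computable q ∧ ∀ s, (q s : ℝ) = F s

/-- A real process is computable. -/
def IsComputableProcess (F : Situation → ℝ) : Prop :=
  ∃ q : Situation → ℕ → ℚ, Computable₂ q ∧
    ∀ s n, |F s - q s n| < (2 : ℝ) ^ (-(n : ℤ))

/-- A real process is lower semicomputable. -/
def IsLSCProcess (F : Situation → ℝ) : Prop :=
  ∃ q : Situation → ℕ → ℚ, Computable₂ q ∧
    (∀ s n, q s n ≤ q s (n + 1)) ∧
    ∀ s, Tendsto (fun m => (q s m : ℝ)) atTop (nhds (F s))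

/-- A (real) growth function: computable, nonnegative, nondecreasing and unbounded. -/
def IsGrowthFunction (τ : ℕ → ℝ) : Prop :=
  (∀ n, 0 ≤ τ n) ∧ (∀ n, τ n ≤ τ (n + 1)) ∧ Tendsto τ atTop atTop ∧
    ∃ q : ℕ → ℕ → ℚ, Computable₂ q ∧ ∀ n m, |τ n - q n m| < (2 : ℝ) ^ (-(m : ℤ))

/-- A real process is unbounded on a path: `limsup_n T(ω_{1:n}) = ∞`. -/
def UnboundedOn (T : Situation → ℝ) (ω : BinPath) : Prop :=
  limsup (fun n => ((T (pref ω n) : ℝ) : EReal)) atTop = ⊤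

/-- A real process is computably unbounded on a path:
`limsup_n [T(ω_{1:n}) − τ(n)] ≥ 0` for some growth function `τ`. -/
def ComputablyUnboundedOn (T : Situation → ℝ) (ω : BinPath) : Prop :=
  ∃ τ : ℕ → ℝ, IsGrowthFunction τ ∧
    0 ≤ limsup (fun n => ((T (pref ω n) - τ n : ℝ) : EReal)) atTop

/-- Computable randomness for the forecasting system `(lo, hi)`:
no recursive positive rational test supermartingale is unbounded on `ω`. -/
def CRandom (lo hi : Situation → ℝ) (ω : BinPath) : Prop :=
  ∀ T : Situation → ℝ, IsRecursiveRational T → (∀ s, 0 < T s) →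
    IsTestSupermartingale lo hi T → ¬ UnboundedOn T ω

/-- Schnorr randomness for the forecasting system `(lo, hi)`:
no recursive positive rational test supermartingale is computably unbounded on `ω`. -/
def SchnorrRandom (lo hi : Situation → ℝ) (ω : BinPath) : Prop :=
  ∀ T : Situation → ℝ, IsRecursiveRational T → (∀ s, 0 < T s) →
    IsTestSupermartingale lo hi T → ¬ ComputablyUnboundedOn T ω

/-- Martin-Löf randomness for the forecasting system `(lo, hi)`:
no lower semicomputable test supermartingale is unbounded on `ω`. -/
def MLRandom (lo hi : Situation → ℝ) (ω : BinPath) : Prop :=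
  ∀ T : Situation → ℝ, IsLSCProcess T →
    IsTestSupermartingale lo hi T → ¬ UnboundedOn T ω

/-- A selection process is temporal if its value depends only on the length. -/
def IsTemporal (S : Situation → Bool) : Prop :=
  ∀ s t : Situation, s.length = t.length → S s = S t

/-- Value of a selection process along a path. -/
def selVal (S : Situation → Bool) (ω : BinPath) (k : ℕ) : ℝ := if S (pref ω k) then 1 else 0

/-- `ω` is `𝒮`-random for the forecasting system `(lo, hi)`. -/
def SSetRandom (𝒮 : Set (Situation → Bool)) (lo hi : Situation → ℝ) (ω : BinPath) : Prop :=
  ∀ S ∈ 𝒮,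
    Tendsto (fun n => ∑ k ∈ Finset.range n, selVal S ω k) atTop atTop →
      0 ≤ liminf (fun n =>
          (((∑ k ∈ Finset.range n, selVal S ω k * (bit (ω k) - lo (pref ω k))) /
              (∑ k ∈ Finset.range n, selVal S ω k) : ℝ) : EReal)) atTop ∧
        limsup (fun n =>
          (((∑ k ∈ Finset.range n, selVal S ω k * (bit (ω k) - hi (pref ω k))) /
              (∑ k ∈ Finset.range n, selVal S ω k) : ℝ) : EReal)) atTop ≤ 0

/-- Weak Church randomness: the selection-process conditions hold for all
recursive temporal selection processes. -/
def WCHRandom (lo hi : Situation → ℝ) (ω : BinPath) : Prop :=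
  SSetRandom {S | Computable S ∧ IsTemporal S} lo hi ω

/-- Global upper expectation of a bounded global gamble `f : BinPath → ℝ`. -/
noncomputable def globalUpperE (lo hi : Situation → ℝ) (f : BinPath → ℝ) : ℝ :=
  sInf {m : ℝ | ∃ M : Situation → ℝ, IsSupermartingale lo hi M ∧ M [] = m ∧
    ∀ ω : BinPath, (f ω : EReal) ≤ liminf (fun n => ((M (pref ω n) : ℝ) : EReal)) atTop}

/-- Upper probability of an event. -/
noncomputable def upperProb (lo hi : Situation → ℝ) (A : Set BinPath) : ℝ :=
  globalUpperE lo hi (Set.indicator A 1)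

/-- An event is almost sure if its complement has upper probability zero. -/
def AlmostSure (lo hi : Situation → ℝ) (A : Set BinPath) : Prop :=
  upperProb lo hi Aᶜ = 0

/-- The set of recursive positive rational test processes `𝓕_C`. -/
def FsetC : Set (Situation → ℝ) :=
  {F | IsRecursiveRational F ∧ (∀ s, 0 < F s) ∧ F [] = 1}

/-- The set of lower semicomputable test processes `𝓕_ML`. -/
def FsetML : Set (Situation → ℝ) :=
  {F | IsLSCProcess F ∧ (∀ s, 0 ≤ F s) ∧ F [] = 1}

/-- The temporal selection process `S^r_F` associated with a real process `F`
and a number `r`. -/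
noncomputable def selProc (r : ℝ) (F : Situation → ℝ) : Situation → Bool := fun s =>
  if ∃ t : Situation, t.length = s.length ∧ 0 < localE r (diffP F t) then true else false

/-- The set of selection processes `𝒮^{p,q}_𝓕`. -/
def SelSet (p q : ℝ) (𝓕 : Set (Situation → ℝ)) : Set (Situation → Bool) :=
  {S | ∃ F ∈ 𝓕, ∃ r ∈ ({p, q} : Set ℝ), S = selProc r F}

/-- The temporal precise forecasting system `φ^ϖ_{p,q}`. -/
def tempFS (p q : ℝ) (ϖ : BinPath) : Situation → ℝ := fun s => if ϖ s.length then q else p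

/-- A test process `F` is generated by the multiplier process `D`. -/
def GeneratedBy (D : Situation → Bool → ℝ) (F : Situation → ℝ) : Prop :=
  F [] = 1 ∧ ∀ s x, F (s ++ [x]) = F s * D s x

/-- A lower semicomputable multiplier process: a nonnegative gamble process that
is lower semicomputable. -/
def IsLSCMultiplier (D : Situation → Bool → ℝ) : Prop :=
  (∀ s x, 0 ≤ D s x) ∧
  ∃ q : Situation → Bool → ℕ → ℚ,
    Computable (fun p : Situation × Bool × ℕ => q p.1 p.2.1 p.2.2) ∧
    (∀ s x n, q s x n ≤ q s x (n + 1)) ∧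
    ∀ s x, Tendsto (fun m => (q s x m : ℝ)) atTop (nhds (D s x))

/-!
For a selection process `S`, a side (above `φ̄` or below `φ̲`) and an accuracy `ε = 1/(j+1)`,
betting the fraction `ε/4` of the capital on the forecast being wrong on that side, at the
situations selected by `S`, is a positive test supermartingale, bounded by `(3/2)^n` at depth `n`.
On a path where `S` selects infinitely often but the selected average beats the forecast by `ε`
infinitely often, its logarithm exceeds `ε²/8` times the number of selected trials infinitely
often, so it is unbounded. These countably many tests are combined as in Ville's theorem: stopping
the `i`-th one at level `1/wᵢ` and mixing with weights `wᵢ` of total mass below `δ` gives a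
supermartingale starting below `δ` that is eventually at least `1` on every non-random path.
Conversely, no supermartingale with nonnegative `liminf` on every path starts below `0`: since the
forecasts lie in `[0,1]`, one can always follow a branch along which it does not increase.
-/

lemma pref_succ (ω : BinPath) (n : ℕ) : pref ω (n + 1) = pref ω n ++ [ω n] := by
  rw [pref, List.ofFn_succ']
  simp [pref, List.concat_eq_append]

lemma pref_prefix (ω : BinPath) {m n : ℕ} (h : m ≤ n) : pref ω m <+: pref ω n := by
  induction n, h using Nat.le_induction with
  | base => exact List.prefix_refl _
  | succ n _ ih => exact ih.trans (pref_succ ω n ▸ List.prefix_append _ _)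

section Supermartingale

variable {lo hi : Situation → ℝ}

lemma exists_le_of_localE_nonpos {p : ℝ} (hp0 : 0 ≤ p) (hp1 : p ≤ 1) {f : Bool → ℝ}
    (h : localE p f ≤ 0) : ∃ x, f x ≤ 0 := by
  by_contra! hf
  unfold localE at h
  rcases hp0.eq_or_lt with rfl | hp
  · linarith [hf false]
  · nlinarith [hf true, hf false]

lemma IsSupermartingale.exists_succ_le (hφ : IsForecastingSystem lo hi) {M : Situation → ℝ}
    (hM : IsSupermartingale lo hi M) (s : Situation) : ∃ x, M (s ++ [x]) ≤ M s := by
  obtain ⟨x, hx⟩ := exists_le_of_localE_nonpos (hφ s).1 ((hφ s).2.1.trans (hφ s).2.2)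
    ((le_max_left _ _).trans (hM s))
  exact ⟨x, sub_nonpos.1 hx⟩

lemma IsSupermartingale.exists_antitone_path (hφ : IsForecastingSystem lo hi)
    {M : Situation → ℝ} (hM : IsSupermartingale lo hi M) :
    ∃ ω : BinPath, Antitone fun n => M (pref ω n) := by
  choose pick hpick using hM.exists_succ_le hφ
  let walk : ℕ → Situation := fun n => Nat.rec [] (fun _ s => s ++ [pick s]) n
  have hwalk : ∀ n, pref (fun k => pick (walk k)) n = walk n := by
    intro n
    induction n with
    | zero => rfl
    | succ n ih => rw [pref_succ, ih]
  exact ⟨fun k => pick (walk k), antitone_nat_of_succ_le fun n => by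
    simpa only [hwalk] using hpick (walk n)⟩

lemma IsSupermartingale.nil_nonneg (hφ : IsForecastingSystem lo hi) {M : Situation → ℝ}
    (hM : IsSupermartingale lo hi M)
    (h : ∀ ω, 0 ≤ liminf (fun n => ((M (pref ω n) : ℝ) : EReal)) atTop) : 0 ≤ M [] := by
  obtain ⟨ω, hω⟩ := hM.exists_antitone_path hφ
  have : liminf (fun n => ((M (pref ω n) : ℝ) : EReal)) atTop ≤ M [] :=
    liminf_le_of_frequently_le (Frequently.of_forall fun n => by
      exact_mod_cast hω (Nat.zero_le n))
  exact_mod_cast (h ω).trans this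

lemma IsSupermartingale.const_mul {F : Situation → ℝ} (hF : IsSupermartingale lo hi F)
    {c : ℝ} (hc : 0 ≤ c) : IsSupermartingale lo hi fun s => c * F s := by
  intro s
  have hE : ∀ p, localE p (diffP (fun s => c * F s) s) = c * localE p (diffP F s) := by
    intro p; simp only [localE, diffP]; ring
  simpa only [upperE, hE, ← mul_max_of_nonneg _ _ hc] using mul_nonpos_of_nonneg_of_nonpos hc (hF s)

lemma IsSupermartingale.tsum {ι : Type*} {M : ι → Situation → ℝ}
    (hM : ∀ i, IsSupermartingale lo hi (M i)) (hsum : ∀ s, Summable fun i => M i s) :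
    IsSupermartingale lo hi fun s => ∑' i, M i s := by
  intro s
  have hE : ∀ p, localE p (diffP (fun s => ∑' i, M i s) s) = ∑' i, localE p (diffP (M i) s) := by
    intro p
    simp only [localE, diffP]
    rw [← (hsum _).tsum_sub (hsum s), ← (hsum _).tsum_sub (hsum s), ← tsum_mul_left,
      ← tsum_mul_left, ← (((hsum _).sub (hsum s)).mul_left p).tsum_add
        (((hsum _).sub (hsum s)).mul_left (1 - p))]
  rw [upperE, hE, hE]
  exact max_le (tsum_nonpos fun i => (le_max_left _ _).trans (hM i s))
    (tsum_nonpos fun i => (le_max_right _ _).trans (hM i s))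

end Supermartingale

section ProductProcess

noncomputable def prodProcess (d : Situation → Bool → ℝ) (s : Situation) : ℝ :=
  ∏ k ∈ Finset.range s.length, d (s.take k) (s.getD k false)

variable (d : Situation → Bool → ℝ)

lemma prodProcess_nil : prodProcess d [] = 1 := by simp [prodProcess]

lemma prodProcess_append (s : Situation) (x : Bool) :
    prodProcess d (s ++ [x]) = prodProcess d s * d s x := by
  rw [prodProcess, List.length_append, List.length_singleton, Finset.prod_range_succ,
    List.take_left' rfl, List.getD_append_right _ _ _ _ le_rfl, Nat.sub_self]
  congr 1
  refine Finset.prod_congr rfl fun k hk => ?_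
  rw [Finset.mem_range] at hk
  rw [List.take_append_of_le_length hk.le, List.getD_append _ _ _ _ hk]

lemma prodProcess_pref (ω : BinPath) (n : ℕ) :
    prodProcess d (pref ω n) = ∏ k ∈ Finset.range n, d (pref ω k) (ω k) := by
  induction n with
  | zero => exact prodProcess_nil d
  | succ n ih => rw [pref_succ, prodProcess_append, ih, Finset.prod_range_succ]

variable {d}

lemma prodProcess_nonneg (hd : ∀ s x, 0 ≤ d s x) (s : Situation) : 0 ≤ prodProcess d s :=
  Finset.prod_nonneg fun _ _ => hd _ _

lemma prodProcess_le_pow {C : ℝ} (hd0 : ∀ s x, 0 ≤ d s x) (hdC : ∀ s x, d s x ≤ C)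
    (s : Situation) : prodProcess d s ≤ C ^ s.length := by
  simpa [prodProcess] using Finset.prod_le_prod (s := Finset.range s.length) (fun _ _ => hd0 _ _)
    (fun _ _ => hdC _ _)

lemma isSupermartingale_prodProcess {lo hi : Situation → ℝ} (hd0 : ∀ s x, 0 ≤ d s x)
    (hd : ∀ s, localE (lo s) (d s) ≤ 1 ∧ localE (hi s) (d s) ≤ 1) :
    IsSupermartingale lo hi (prodProcess d) := by
  intro s
  have hE : ∀ p, localE p (diffP (prodProcess d) s) = prodProcess d s * (localE p (d s) - 1) := by
    intro p; simp only [localE, diffP, prodProcess_append]; ring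
  rw [upperE, hE, hE]
  exact max_le (mul_nonpos_of_nonneg_of_nonpos (prodProcess_nonneg hd0 s) (by linarith [(hd s).1]))
    (mul_nonpos_of_nonneg_of_nonpos (prodProcess_nonneg hd0 s) (by linarith [(hd s).2]))

end ProductProcess

section Stopping

/-- The shortest prefix of `s` at which `F` reaches the level `c`, or `s` itself if there is
none. -/
noncomputable def hitPrefix (F : Situation → ℝ) (c : ℝ) (s : Situation) : Situation :=
  (s.inits.find? fun t => c ≤ F t).getD s

noncomputable def stoppedProcess (F : Situation → ℝ) (c : ℝ) (s : Situation) : ℝ :=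
  F (hitPrefix F c s)

variable {F : Situation → ℝ} {c : ℝ}

lemma hitPrefix_nil : hitPrefix F c [] = [] := by
  simp only [hitPrefix, List.inits, List.find?_singleton]
  split <;> rfl

lemma hitPrefix_prefix (s : Situation) : hitPrefix F c s <+: s := by
  unfold hitPrefix
  cases h : s.inits.find? fun t => c ≤ F t with
  | none => exact List.prefix_refl s
  | some t => exact (List.mem_inits _ _).1 (List.mem_of_find?_eq_some h)

lemma find?_inits_isSome_iff {s : Situation} :
    (s.inits.find? fun t => c ≤ F t).isSome ↔ ∃ t, t <+: s ∧ c ≤ F t := by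
  simp [List.find?_isSome, List.mem_inits]

lemma hitPrefix_append (s : Situation) (x : Bool) :
    hitPrefix F c (s ++ [x]) = if ∃ t, t <+: s ∧ c ≤ F t then hitPrefix F c s else s ++ [x] := by
  have hinits : (s ++ [x]).inits = s.inits ++ [s ++ [x]] := by simp [List.inits_append]
  unfold hitPrefix
  rw [hinits, List.find?_append]
  split_ifs with h
  · obtain ⟨t, ht⟩ := Option.isSome_iff_exists.1 (find?_inits_isSome_iff.2 h)
    rw [ht]; rfl
  · rw [Option.not_isSome_iff_eq_none.1 (mt find?_inits_isSome_iff.1 h), Option.none_or,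
      List.find?_singleton]
    split <;> rfl

lemma le_stoppedProcess {s : Situation} (h : ∃ t, t <+: s ∧ c ≤ F t) :
    c ≤ stoppedProcess F c s := by
  obtain ⟨t, ht⟩ := Option.isSome_iff_exists.1 (find?_inits_isSome_iff.2 h)
  simpa [stoppedProcess, hitPrefix, ht] using List.find?_some ht

lemma stoppedProcess_nil : stoppedProcess F c [] = F [] := by
  rw [stoppedProcess, hitPrefix_nil]

lemma stoppedProcess_le_of_le {B : ℕ → ℝ} (hB : Monotone B) (hF : ∀ s, F s ≤ B s.length)
    (s : Situation) : stoppedProcess F c s ≤ B s.length :=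
  (hF _).trans (hB (hitPrefix_prefix s).length_le)

lemma le_stoppedProcess_pref {ω : BinPath} {n m : ℕ} (hn : c ≤ F (pref ω n)) (hnm : n ≤ m) :
    c ≤ stoppedProcess F c (pref ω m) :=
  le_stoppedProcess ⟨pref ω n, pref_prefix ω hnm, hn⟩

lemma IsTestSupermartingale.stopped {lo hi : Situation → ℝ} (hF : IsTestSupermartingale lo hi F)
    (c : ℝ) : IsTestSupermartingale lo hi (stoppedProcess F c) := by
  refine ⟨fun s => ?_, fun s => hF.2.1 _, stoppedProcess_nil.trans hF.2.2⟩
  by_cases h : ∃ t, t <+: s ∧ c ≤ F t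
  · have hΔ : diffP (stoppedProcess F c) s = 0 := by
      funext x; simp [diffP, stoppedProcess, hitPrefix_append, h]
    simp [hΔ, upperE, localE]
  · have hs : hitPrefix F c s = s := by
      simp [hitPrefix, Option.not_isSome_iff_eq_none.1 (mt find?_inits_isSome_iff.1 h)]
    have hΔ : diffP (stoppedProcess F c) s = diffP F s := by
      funext x; simp [diffP, stoppedProcess, hitPrefix_append, h, hs]
    exact hΔ ▸ hF.1 s

end Stopping

section UpperProbability

variable {lo hi : Situation → ℝ}

def dominatingValues (lo hi : Situation → ℝ) (f : BinPath → ℝ) : Set ℝ :=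
  {m : ℝ | ∃ M : Situation → ℝ, IsSupermartingale lo hi M ∧ M [] = m ∧
    ∀ ω : BinPath, (f ω : EReal) ≤ liminf (fun n => ((M (pref ω n) : ℝ) : EReal)) atTop}

lemma nonneg_of_mem_dominatingValues (hφ : IsForecastingSystem lo hi) {f : BinPath → ℝ}
    (hf : 0 ≤ f) {m : ℝ} (hm : m ∈ dominatingValues lo hi f) : 0 ≤ m := by
  obtain ⟨M, hM, rfl, hdom⟩ := hm
  exact hM.nil_nonneg hφ fun ω => (EReal.coe_nonneg.2 (hf ω)).trans (hdom ω)

lemma upperProb_nonneg (hφ : IsForecastingSystem lo hi) (A : Set BinPath) :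
    0 ≤ upperProb lo hi A :=
  Real.sInf_nonneg fun _ => nonneg_of_mem_dominatingValues hφ (Set.indicator_nonneg (by simp))

lemma upperProb_le (hφ : IsForecastingSystem lo hi) {A : Set BinPath} {M : Situation → ℝ}
    (hM : IsSupermartingale lo hi M) (hM0 : ∀ s, 0 ≤ M s)
    (hA : ∀ ω ∈ A, 1 ≤ liminf (fun n => ((M (pref ω n) : ℝ) : EReal)) atTop) :
    upperProb lo hi A ≤ M [] := by
  have hind : (0 : BinPath → ℝ) ≤ A.indicator 1 := Set.indicator_nonneg (by simp)
  refine csInf_le ⟨0, fun _ => nonneg_of_mem_dominatingValues hφ hind⟩ ⟨M, hM, rfl, fun ω => ?_⟩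
  by_cases hω : ω ∈ A
  · simpa [hω] using hA ω hω
  · simpa [hω] using le_liminf_of_le (by isBoundedDefault)
      (Eventually.of_forall fun n => EReal.coe_nonneg.2 (hM0 (pref ω n)))

end UpperProbability

lemma unboundedOn_iff {T : Situation → ℝ} {ω : BinPath} :
    UnboundedOn T ω ↔ ∀ c : ℝ, ∃ᶠ n in atTop, c ≤ T (pref ω n) := by
  rw [UnboundedOn, EReal.eq_top_iff_forall_lt]
  refine ⟨fun h c => ?_, fun h c => ?_⟩
  · exact (frequently_lt_of_lt_limsup (by isBoundedDefault) (h c)).mono fun n hn =>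
      (EReal.coe_lt_coe_iff.1 hn).le
  · exact (EReal.coe_lt_coe_iff.2 (lt_add_one c)).trans_le (le_limsup_of_frequently_le
      ((h (c + 1)).mono fun n hn => EReal.coe_le_coe_iff.2 hn) (by isBoundedDefault))

/-- A countable form of Ville's theorem; the bound `B` makes the mixture of the stopped tests
summable. -/
theorem upperProb_eq_zero_of_subset_unboundedOn {lo hi : Situation → ℝ}
    (hφ : IsForecastingSystem lo hi) {ι : Type*} [Countable ι] {T : ι → Situation → ℝ}
    (hT : ∀ i, IsTestSupermartingale lo hi (T i)) {B : ℕ → ℝ} (hB : Monotone B)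
    (hTB : ∀ i s, T i s ≤ B s.length) {A : Set BinPath}
    (hA : A ⊆ {ω | ∃ i, UnboundedOn (T i) ω}) : upperProb lo hi A = 0 := by
  refine le_antisymm (le_of_forall_pos_le_add fun δ hδ => ?_) (upperProb_nonneg hφ A)
  obtain ⟨w, hw0, c, hwc, hcδ⟩ :=
    NNReal.exists_pos_sum_of_countable (ε := ⟨δ, hδ.le⟩) (ne_of_gt hδ) ι
  set G : ι → Situation → ℝ := fun i => stoppedProcess (T i) (w i : ℝ)⁻¹
  have hG : ∀ i, IsTestSupermartingale lo hi (G i) := fun i => (hT i).stopped _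
  have hwG : ∀ i s, 0 ≤ (w i : ℝ) * G i s := fun i s => mul_nonneg (w i).2 ((hG i).2.1 s)
  have hsum : ∀ s, Summable fun i => (w i : ℝ) * G i s := fun s =>
    ((NNReal.summable_coe.2 hwc.summable).mul_right (B s.length)).of_nonneg_of_le (hwG · s)
      fun i => mul_le_mul_of_nonneg_left (stoppedProcess_le_of_le hB (hTB i) s) (w i).2
  set M : Situation → ℝ := fun s => ∑' i, (w i : ℝ) * G i s
  have hM : IsSupermartingale lo hi M :=
    IsSupermartingale.tsum (fun i => (hG i).1.const_mul (w i).2) hsum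
  have hMA : ∀ ω ∈ A, 1 ≤ liminf (fun n => ((M (pref ω n) : ℝ) : EReal)) atTop := by
    intro ω hω
    obtain ⟨i, hi⟩ := hA hω
    obtain ⟨n, hn⟩ := (unboundedOn_iff.1 hi (w i : ℝ)⁻¹).exists
    refine le_liminf_of_le (by isBoundedDefault) (eventually_atTop.2 ⟨n, fun m hm => ?_⟩)
    have hwi : (0 : ℝ) < w i := hw0 i
    calc (1 : EReal) = ((w i * (w i : ℝ)⁻¹ : ℝ) : EReal) := by rw [mul_inv_cancel₀ hwi.ne']; rfl
      _ ≤ ((w i * G i (pref ω m) : ℝ) : EReal) :=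
        EReal.coe_le_coe_iff.2 (mul_le_mul_of_nonneg_left (le_stoppedProcess_pref hn hm) hwi.le)
      _ ≤ M (pref ω m) := EReal.coe_le_coe_iff.2 ((hsum _).le_tsum i fun j _ => hwG j _)
  have hMnil : M [] = c := by
    simp only [M, (hG _).2.2, mul_one]
    exact (NNReal.hasSum_coe.2 hwc).tsum_eq
  calc upperProb lo hi A ≤ M [] := upperProb_le hφ hM (fun s => tsum_nonneg (hwG · s)) hMA
    _ ≤ 0 + δ := by rw [hMnil, zero_add]; exact_mod_cast hcδ.le

lemma exp_sub_two_mul_sq_le_one_add {u : ℝ} (hu : |u| ≤ 1 / 2) :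
    Real.exp (u - 2 * u ^ 2) ≤ 1 + u := by
  obtain ⟨hu₁, -⟩ := abs_le.1 hu
  have hpos : 0 < 1 + u := by linarith
  have hlog : u - 2 * u ^ 2 ≤ Real.log (1 + u) := by
    refine le_trans ?_ (Real.one_sub_inv_le_log_of_pos hpos)
    rw [show 1 - (1 + u)⁻¹ = u / (1 + u) by field_simp; ring, le_div_iff₀ hpos]
    nlinarith [mul_nonneg (sq_nonneg u) (by linarith : 0 ≤ 1 + 2 * u)]
  simpa [Real.exp_log hpos] using Real.exp_le_exp.2 hlog

section Betting

variable {lo hi : Situation → ℝ}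

/-- The stake `ε / 4` keeps every factor in `[1/2, 3/2]`. -/
noncomputable def bettingProcess (S : Situation → Bool) (g : Situation → Bool → ℝ) (ε : ℝ) :
    Situation → ℝ :=
  prodProcess fun s x => 1 + ε / 4 * (if S s then 1 else 0) * g s x

variable {S : Situation → Bool} {g : Situation → Bool → ℝ} {ε : ℝ}

lemma abs_bet_le (hε0 : 0 ≤ ε) (hε1 : ε ≤ 1) (hg : ∀ s x, |g s x| ≤ 1) (s : Situation)
    (x : Bool) : |ε / 4 * (if S s then 1 else 0) * g s x| ≤ 1 / 2 := by
  have hS : |(if S s then (1 : ℝ) else 0)| ≤ 1 := by split <;> simp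
  rw [abs_mul, abs_mul, abs_of_nonneg (by positivity : 0 ≤ ε / 4)]
  calc ε / 4 * |(if S s then (1 : ℝ) else 0)| * |g s x| ≤ 1 / 4 * 1 * 1 := by
        gcongr; exact hg s x
    _ ≤ 1 / 2 := by norm_num

lemma bettingProcess_isTestSupermartingale (hε0 : 0 ≤ ε) (hε1 : ε ≤ 1) (hg : ∀ s x, |g s x| ≤ 1)
    (hlocal : ∀ s, localE (lo s) (g s) ≤ 0 ∧ localE (hi s) (g s) ≤ 0) :
    IsTestSupermartingale lo hi (bettingProcess S g ε) := by
  have hd0 : ∀ s x, 0 ≤ 1 + ε / 4 * (if S s then 1 else 0) * g s x := fun s x => by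
    linarith [(abs_le.1 (abs_bet_le (S := S) hε0 hε1 hg s x)).1]
  have hE : ∀ p s, localE p (fun x => 1 + ε / 4 * (if S s then 1 else 0) * g s x) =
      1 + ε / 4 * (if S s then 1 else 0) * localE p (g s) := by
    intro p s; simp only [localE]; ring
  have hstake : ∀ s, 0 ≤ ε / 4 * (if S s then (1 : ℝ) else 0) := fun s => by
    split <;> positivity
  refine ⟨isSupermartingale_prodProcess hd0 fun s => ⟨?_, ?_⟩, prodProcess_nonneg hd0,
    prodProcess_nil _⟩ <;> rw [hE]
  · linarith [mul_nonpos_of_nonneg_of_nonpos (hstake s) (hlocal s).1]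
  · linarith [mul_nonpos_of_nonneg_of_nonpos (hstake s) (hlocal s).2]

lemma bettingProcess_le_pow (hε0 : 0 ≤ ε) (hε1 : ε ≤ 1) (hg : ∀ s x, |g s x| ≤ 1)
    (s : Situation) : bettingProcess S g ε s ≤ (3 / 2) ^ s.length := by
  refine prodProcess_le_pow (fun s x => ?_) (fun s x => ?_) s <;>
    linarith [abs_le.1 (abs_bet_le (S := S) hε0 hε1 hg s x)]

lemma exp_le_bettingProcess_pref (hε0 : 0 ≤ ε) (hε1 : ε ≤ 1) (hg : ∀ s x, |g s x| ≤ 1)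
    (ω : BinPath) (n : ℕ) :
    Real.exp (ε / 4 * ∑ k ∈ Finset.range n, selVal S ω k * g (pref ω k) (ω k) -
      ε ^ 2 / 8 * ∑ k ∈ Finset.range n, selVal S ω k) ≤ bettingProcess S g ε (pref ω n) := by
  set u : ℕ → ℝ := fun k => ε / 4 * selVal S ω k * g (pref ω k) (ω k)
  have hsq : ∀ k, u k ^ 2 ≤ ε ^ 2 / 16 * selVal S ω k := fun k => by
    have hg2 := sq_le_one_iff_abs_le_one _ |>.2 (hg (pref ω k) (ω k))
    simp only [u, selVal]
    split
    · nlinarith [sq_nonneg ε]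
    · simp
  have hsum : ε / 4 * ∑ k ∈ Finset.range n, selVal S ω k * g (pref ω k) (ω k) -
      ε ^ 2 / 8 * ∑ k ∈ Finset.range n, selVal S ω k ≤
      ∑ k ∈ Finset.range n, (u k - 2 * u k ^ 2) := by
    have h2 : ∑ k ∈ Finset.range n, u k ^ 2 ≤ ε ^ 2 / 16 * ∑ k ∈ Finset.range n, selVal S ω k := by
      rw [Finset.mul_sum]; exact Finset.sum_le_sum fun k _ => hsq k
    have h1 : ∑ k ∈ Finset.range n, u k =
        ε / 4 * ∑ k ∈ Finset.range n, selVal S ω k * g (pref ω k) (ω k) := by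
      simp only [u, Finset.mul_sum, mul_assoc]
    rw [Finset.sum_sub_distrib, ← Finset.mul_sum, h1]
    linarith
  calc _ ≤ Real.exp (∑ k ∈ Finset.range n, (u k - 2 * u k ^ 2)) := Real.exp_le_exp.2 hsum
    _ = ∏ k ∈ Finset.range n, Real.exp (u k - 2 * u k ^ 2) := Real.exp_sum _ _
    _ ≤ ∏ k ∈ Finset.range n, (1 + u k) := Finset.prod_le_prod (fun _ _ => (Real.exp_pos _).le)
        fun k _ => exp_sub_two_mul_sq_le_one_add (abs_bet_le hε0 hε1 hg _ _)
    _ = bettingProcess S g ε (pref ω n) := by rw [bettingProcess, prodProcess_pref]; rfl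

lemma unboundedOn_bettingProcess (hε0 : 0 < ε) (hε1 : ε ≤ 1) (hg : ∀ s x, |g s x| ≤ 1)
    {ω : BinPath} (hN : Tendsto (fun n => ∑ k ∈ Finset.range n, selVal S ω k) atTop atTop)
    (hfreq : ∃ᶠ n in atTop, ε * ∑ k ∈ Finset.range n, selVal S ω k ≤
      ∑ k ∈ Finset.range n, selVal S ω k * g (pref ω k) (ω k)) :
    UnboundedOn (bettingProcess S g ε) ω := by
  refine unboundedOn_iff.2 fun c => ?_
  set L := Real.log (max c 1)
  refine (hfreq.and_eventually (hN.eventually_ge_atTop (8 / ε ^ 2 * L))).mono ?_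
  rintro n ⟨hn, hNn⟩
  have hL : L ≤ ε ^ 2 / 8 * ∑ k ∈ Finset.range n, selVal S ω k := by
    have h8 : ε ^ 2 / 8 * (8 / ε ^ 2 * L) = L := by field_simp
    linarith [mul_le_mul_of_nonneg_left hNn (by positivity : 0 ≤ ε ^ 2 / 8)]
  calc c ≤ max c 1 := le_max_left _ _
    _ = Real.exp L := (Real.exp_log (lt_max_of_lt_right one_pos)).symm
    _ ≤ Real.exp (ε / 4 * ∑ k ∈ Finset.range n, selVal S ω k * g (pref ω k) (ω k) -
        ε ^ 2 / 8 * ∑ k ∈ Finset.range n, selVal S ω k) := by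
      refine Real.exp_le_exp.2 ?_
      nlinarith [mul_le_mul_of_nonneg_left hn (by positivity : 0 ≤ ε / 4)]
    _ ≤ _ := exp_le_bettingProcess_pref hε0.le hε1 hg ω n

end Betting

section Violation

variable {lo hi : Situation → ℝ}

/-- Side `true` gains when ones occur more often than `hi` predicts, side `false` when they occur
less often than `lo` predicts. -/
def sideGamble (lo hi : Situation → ℝ) (b : Bool) (s : Situation) (x : Bool) : ℝ :=
  if b then bit x - hi s else lo s - bit x

lemma abs_sideGamble_le (hφ : IsForecastingSystem lo hi) (b : Bool) (s : Situation) (x : Bool) :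
    |sideGamble lo hi b s x| ≤ 1 := by
  obtain ⟨h0, hlh, h1⟩ := hφ s
  rw [abs_le]
  cases b <;> cases x <;> simp only [sideGamble, bit] <;> constructor <;> norm_num <;> linarith

lemma localE_sideGamble_nonpos (b : Bool) {s : Situation} {p : ℝ} (hp : lo s ≤ p ∧ p ≤ hi s) :
    localE p (sideGamble lo hi b s) ≤ 0 := by
  cases b <;> simp only [sideGamble, localE, bit] <;> norm_num <;> linarith [hp.1, hp.2]

noncomputable def selAvg (S : Situation → Bool) (ω : BinPath) (g : Situation → Bool → ℝ)
    (n : ℕ) : ℝ :=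
  (∑ k ∈ Finset.range n, selVal S ω k * g (pref ω k) (ω k)) / ∑ k ∈ Finset.range n, selVal S ω k

lemma selAvg_sideGamble_false (S : Situation → Bool) (ω : BinPath) (n : ℕ) :
    selAvg S ω (sideGamble lo hi false) n = -selAvg S ω (fun s x => bit x - lo s) n := by
  simp only [selAvg, sideGamble, ← neg_div, ← Finset.sum_neg_distrib]
  congr 1
  refine Finset.sum_congr rfl fun k _ => ?_
  simp only [Bool.false_eq_true, if_false]
  ring

lemma exists_pos_limsup_selAvg_sideGamble {S : Situation → Bool} {ω : BinPath}
    (h : ¬ (0 ≤ liminf (fun n => ((selAvg S ω (fun s x => bit x - lo s) n : ℝ) : EReal)) atTop ∧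
      limsup (fun n => ((selAvg S ω (fun s x => bit x - hi s) n : ℝ) : EReal)) atTop ≤ 0)) :
    ∃ b, 0 < limsup (fun n => ((selAvg S ω (sideGamble lo hi b) n : ℝ) : EReal)) atTop := by
  rcases not_and_or.1 h with h | h
  · refine ⟨false, ?_⟩
    simp only [selAvg_sideGamble_false, EReal.coe_neg]
    exact EReal.neg_pos.2 (not_le.1 h) |>.trans_eq (EReal.limsup_neg).symm
  · exact ⟨true, not_le.1 h⟩

lemma exists_frequently_mul_le_of_pos_limsup {S : Situation → Bool} {ω : BinPath}
    {g : Situation → Bool → ℝ}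
    (hN : Tendsto (fun n => ∑ k ∈ Finset.range n, selVal S ω k) atTop atTop)
    (h : 0 < limsup (fun n => ((selAvg S ω g n : ℝ) : EReal)) atTop) :
    ∃ j : ℕ, ∃ᶠ n in atTop, 1 / ((j : ℝ) + 1) * ∑ k ∈ Finset.range n, selVal S ω k ≤
      ∑ k ∈ Finset.range n, selVal S ω k * g (pref ω k) (ω k) := by
  obtain ⟨r, hr0, hr⟩ := EReal.lt_iff_exists_real_btwn.1 h
  obtain ⟨j, hj⟩ := exists_nat_one_div_lt (EReal.coe_pos.1 hr0)
  refine ⟨j, ((frequently_lt_of_lt_limsup (by isBoundedDefault) hr).and_eventually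
    (hN.eventually_gt_atTop 0)).mono fun n ⟨hn, hNpos⟩ => ?_⟩
  rw [EReal.coe_lt_coe_iff, selAvg, lt_div_iff₀ hNpos] at hn
  nlinarith

lemma one_div_natCast_add_one_le_one (j : ℕ) : 1 / ((j : ℝ) + 1) ≤ 1 :=
  div_le_one_of_le₀ (by linarith [j.cast_nonneg (α := ℝ)]) (by positivity)

lemma exists_unboundedOn_of_not_sSetRandom (hφ : IsForecastingSystem lo hi)
    {𝒮 : Set (Situation → Bool)} {ω : BinPath} (hω : ¬ SSetRandom 𝒮 lo hi ω) :
    ∃ S ∈ 𝒮, ∃ b : Bool, ∃ j : ℕ,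
      UnboundedOn (bettingProcess S (sideGamble lo hi b) (1 / ((j : ℝ) + 1))) ω := by
  simp only [SSetRandom, not_forall] at hω
  obtain ⟨S, hS, hN, hviol⟩ := hω
  obtain ⟨b, hb⟩ := exists_pos_limsup_selAvg_sideGamble hviol
  obtain ⟨j, hj⟩ := exists_frequently_mul_le_of_pos_limsup hN hb
  exact ⟨S, hS, b, j, unboundedOn_bettingProcess (by positivity)
    (one_div_natCast_add_one_le_one j) (abs_sideGamble_le hφ b) hN hj⟩

end Violation

/-- for a countable set `𝒮` of selection processes, the set of
`𝒮`-random paths for `φ` is almost sure for `φ`. -/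
theorem statement_10 (lo hi : Situation → ℝ) (hφ : IsForecastingSystem lo hi)
    (𝒮 : Set (Situation → Bool)) (hc : 𝒮.Countable) :
    AlmostSure lo hi {ω : BinPath | SSetRandom 𝒮 lo hi ω} := by
  have : Countable 𝒮 := hc.to_subtype
  let T : 𝒮 × Bool × ℕ → Situation → ℝ := fun i =>
    bettingProcess i.1 (sideGamble lo hi i.2.1) (1 / (i.2.2 + 1))
  have hT : ∀ i, IsTestSupermartingale lo hi (T i) := fun i =>
    bettingProcess_isTestSupermartingale (by positivity) (one_div_natCast_add_one_le_one _)
      (abs_sideGamble_le hφ _) fun s => ⟨localE_sideGamble_nonpos _ ⟨le_rfl, (hφ s).2.1⟩,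
        localE_sideGamble_nonpos _ ⟨(hφ s).2.1, le_rfl⟩⟩
  have hTB : ∀ i s, T i s ≤ (3 / 2) ^ s.length := fun i =>
    bettingProcess_le_pow (by positivity) (one_div_natCast_add_one_le_one _)
      (abs_sideGamble_le hφ _)
  refine upperProb_eq_zero_of_subset_unboundedOn hφ hT (pow_right_mono₀ (by norm_num)) hTB
    fun ω hω => ?_
  obtain ⟨S, hS, b, j, h⟩ := exists_unboundedOn_of_not_sSetRandom hφ hω
  exact ⟨(⟨S, hS⟩, b, j), h⟩
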